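/- Let C be a Cauchy complete category and let (C, D) be a display map category which models Σ-types, Id-types, and Π-types. Then (C, D̄) models Π-types: for every pair of composable morphisms g : W → X and f : X → Y in D̄ = (^⧄D)^⧄ there exists a morphism Π_f g in D̄ with codomain Y and a bijection (C/Y)(y, Π_f g) ≅ (C/X)(f*y, g) natural in y ∈ C/Y. -/

import Mathlib

open CategoryTheory Limits

universe v u

namespace DMCPaper

variable {C : Type u} [Category.{v} C]

/-- The class of morphisms with the left lifting property against every morphism of `M`. -/
def Llp (M : MorphismProperty C) : MorphismProperty C :=
  fun _ _ f => ∀ ⦃U V : C⦄ (g : U ⟶ V), M g → HasLiftingProperty f g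

/-- The class of morphisms with the right lifting property against every morphism of `M`. -/
def Rlp (M : MorphismProperty C) : MorphismProperty C :=
  fun _ _ f => ∀ ⦃U V : C⦄ (g : U ⟶ V), M g → HasLiftingProperty g f

/-- `D̄ = (^⧄D)^⧄`. -/
def Bar (D : MorphismProperty C) : MorphismProperty C := Rlp (Llp D)

/-- `(C, D)` is a display map category. -/
structure IsDisplayMapCategory (D : MorphismProperty C) : Prop where
  hasTerminal : HasTerminal C
  mem_of_isIso : ∀ ⦃X Y : C⦄ (f : X ⟶ Y), IsIso f → D f
  mem_of_isTerminal : ∀ ⦃X Y : C⦄ (f : X ⟶ Y), IsTerminal Y → D f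
  hasPullback : ∀ ⦃X Y A : C⦄ (d : X ⟶ Y) (α : A ⟶ Y), D d → HasPullback α d
  stable : ∀ ⦃P A X Y : C⦄ (h : P ⟶ A) (k : P ⟶ X) (α : A ⟶ Y) (d : X ⟶ Y),
      IsPullback h k α d → D d → D h

/-- `(C, D)` models `Σ`-types: `D` is closed under composition. -/
def ModelsSigma (D : MorphismProperty C) : Prop :=
  ∀ ⦃X Y Z : C⦄ (f : X ⟶ Y) (g : Y ⟶ Z), D f → D g → D (f ≫ g)

/-- `(C, D)` models (Paulin-Mohring) `Id`-types. -/
def ModelsId (D : MorphismProperty C) : Prop :=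
  ∀ ⦃X Y : C⦄ (f : X ⟶ Y), D f →
    ∃ (P : C) (π₀ π₁ : P ⟶ X) (hP : IsPullback π₀ π₁ f f)
      (I : C) (r : X ⟶ I) (ε : I ⟶ P),
      r ≫ ε = hP.lift (𝟙 X) (𝟙 X) rfl ∧ D ε ∧
      ∀ (π : P ⟶ X), (π = π₀ ∨ π = π₁) →
        ∀ ⦃A : C⦄ (α : A ⟶ X) ⦃Q : C⦄ (p : Q ⟶ A) (q : Q ⟶ I),
          IsPullback p q α (ε ≫ π) →
          ∀ (l : A ⟶ Q), l ≫ p = 𝟙 A → l ≫ q = α ≫ r → Llp D l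

/-- Functorial `Id`-type structure on a display map category. -/
structure FunctorialIdData (D : MorphismProperty C) where
  P : ∀ ⦃X Y : C⦄ (f : X ⟶ Y), D f → C
  π₀ : ∀ ⦃X Y : C⦄ (f : X ⟶ Y) (hf : D f), P f hf ⟶ X
  π₁ : ∀ ⦃X Y : C⦄ (f : X ⟶ Y) (hf : D f), P f hf ⟶ X
  isPullback : ∀ ⦃X Y : C⦄ (f : X ⟶ Y) (hf : D f), IsPullback (π₀ f hf) (π₁ f hf) f f
  I : ∀ ⦃X Y : C⦄ (f : X ⟶ Y), D f → C
  r : ∀ ⦃X Y : C⦄ (f : X ⟶ Y) (hf : D f), X ⟶ I f hf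
  ε : ∀ ⦃X Y : C⦄ (f : X ⟶ Y) (hf : D f), I f hf ⟶ P f hf
  fact : ∀ ⦃X Y : C⦄ (f : X ⟶ Y) (hf : D f),
    r f hf ≫ ε f hf = (isPullback f hf).lift (𝟙 X) (𝟙 X) rfl
  ε_mem : ∀ ⦃X Y : C⦄ (f : X ⟶ Y) (hf : D f), D (ε f hf)
  lp : ∀ ⦃X Y : C⦄ (f : X ⟶ Y) (hf : D f) (π : P f hf ⟶ X),
    (π = π₀ f hf ∨ π = π₁ f hf) →
    ∀ ⦃A : C⦄ (α : A ⟶ X) ⦃Q : C⦄ (p : Q ⟶ A) (q : Q ⟶ I f hf),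
      IsPullback p q α (ε f hf ≫ π) →
      ∀ (l : A ⟶ Q), l ≫ p = 𝟙 A → l ≫ q = α ≫ r f hf → Llp D l
  map : ∀ ⦃Y X X' : C⦄ (f : X ⟶ Y) (f' : X' ⟶ Y) (hf : D f) (hf' : D f')
    (u : X ⟶ X'), u ≫ f' = f → (I f hf ⟶ I f' hf')
  map_r : ∀ ⦃Y X X' : C⦄ (f : X ⟶ Y) (f' : X' ⟶ Y) (hf : D f) (hf' : D f')
    (u : X ⟶ X') (hu : u ≫ f' = f),
    r f hf ≫ map f f' hf hf' u hu = u ≫ r f' hf'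
  map_ε : ∀ ⦃Y X X' : C⦄ (f : X ⟶ Y) (f' : X' ⟶ Y) (hf : D f) (hf' : D f')
    (u : X ⟶ X') (hu : u ≫ f' = f),
    map f f' hf hf' u hu ≫ ε f' hf' =
      ε f hf ≫ (isPullback f' hf').lift (π₀ f hf ≫ u) (π₁ f hf ≫ u)
        (by rw [Category.assoc, Category.assoc, hu]; exact (isPullback f hf).w)
  map_id : ∀ ⦃X Y : C⦄ (f : X ⟶ Y) (hf : D f),
    map f f hf hf (𝟙 X) (Category.id_comp f) = 𝟙 (I f hf)
  map_comp : ∀ ⦃Y X X' X'' : C⦄ (f : X ⟶ Y) (f' : X' ⟶ Y) (f'' : X'' ⟶ Y)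
    (hf : D f) (hf' : D f') (hf'' : D f'')
    (u : X ⟶ X') (hu : u ≫ f' = f) (v : X' ⟶ X'') (hv : v ≫ f'' = f'),
    map f f'' hf hf'' (u ≫ v) (by rw [Category.assoc, hv, hu]) =
      map f f' hf hf' u hu ≫ map f' f'' hf' hf'' v hv

/-- `(C, D)` models functorial `Id`-types. -/
def ModelsFunctorialId (D : MorphismProperty C) : Prop :=
  Nonempty (FunctorialIdData D)

/-- `(C, D)` models `Π`-types. -/
def ModelsPi (D : MorphismProperty C) : Prop :=
  ∀ ⦃W X Y : C⦄ (g : W ⟶ X) (f : X ⟶ Y), D g → D f →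
    ∃ (PI : C) (pf : PI ⟶ Y), D pf ∧
      ∃ φ : ∀ ⦃A Q : C⦄ (y : A ⟶ Y) (a : Q ⟶ A) (q : Q ⟶ X),
          IsPullback a q y f →
          ({u : A ⟶ PI // u ≫ pf = y} ≃ {v : Q ⟶ W // v ≫ g = q}),
        ∀ ⦃A A' Q Q' : C⦄ (y : A ⟶ Y) (y' : A' ⟶ Y) (t : A ⟶ A') (ht : t ≫ y' = y)
          (a : Q ⟶ A) (q : Q ⟶ X) (hQ : IsPullback a q y f)
          (a' : Q' ⟶ A') (q' : Q' ⟶ X) (hQ' : IsPullback a' q' y' f)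
          (s : Q ⟶ Q'), s ≫ a' = a ≫ t → s ≫ q' = q →
          ∀ (u' : A' ⟶ PI) (hu' : u' ≫ pf = y'),
            (φ y a q hQ ⟨t ≫ u', by rw [Category.assoc, hu', ht]⟩).1 =
              s ≫ (φ y' a' q' hQ' ⟨u', hu'⟩).1

/-- `(L, R)` is a weak factorization system on `C`. -/
def IsWFS (L R : MorphismProperty C) : Prop :=
  (∀ ⦃X Y : C⦄ (f : X ⟶ Y), ∃ (Z : C) (l : X ⟶ Z) (ρ : Z ⟶ Y), L l ∧ R ρ ∧ l ≫ ρ = f)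
  ∧ L = Llp R ∧ R = Rlp L

/-- `f` is a retract of `g` in the arrow category `C^2`. -/
def IsRetractOf {X Y U V : C} (f : X ⟶ Y) (g : U ⟶ V) : Prop :=
  ∃ (iX : X ⟶ U) (iY : Y ⟶ V) (rX : U ⟶ X) (rY : V ⟶ Y),
    iX ≫ g = f ≫ iY ∧ rX ≫ f = g ≫ rY ∧ iX ≫ rX = 𝟙 X ∧ iY ≫ rY = 𝟙 Y

/-- `(C, D)` models the formation and introduction rules of `Id`-types. -/
def ModelsFormIntro (D : MorphismProperty C) : Prop :=
  ∀ ⦃A Γ : C⦄ (d : A ⟶ Γ), D d →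
    ∃ (P : C) (π₀ π₁ : P ⟶ A) (hP : IsPullback π₀ π₁ d d)
      (I : C) (r : A ⟶ I) (ε : I ⟶ P),
      r ≫ ε = hP.lift (𝟙 A) (𝟙 A) rfl ∧ D ε

/-- `(C, D)` models Paulin-Mohring `Id`-types. -/
def ModelsPaulinMohringId (D : MorphismProperty C) : Prop :=
  ∀ ⦃A Γ : C⦄ (d : A ⟶ Γ), D d →
    ∃ (P : C) (π₀ π₁ : P ⟶ A) (hP : IsPullback π₀ π₁ d d)
      (I : C) (r : A ⟶ I) (ε : I ⟶ P),
      r ≫ ε = hP.lift (𝟙 A) (𝟙 A) rfl ∧ D ε ∧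
      ∀ (π : P ⟶ A), (π = π₀ ∨ π = π₁) →
        ∀ ⦃Δ : C⦄ (σ : Δ ⟶ A) ⦃Q : C⦄ (p : Q ⟶ Δ) (q : Q ⟶ I),
          IsPullback p q σ (ε ≫ π) →
          ∀ (l : Δ ⟶ Q), l ≫ p = 𝟙 Δ → l ≫ q = σ ≫ r → Llp D l

/-- `(C, D)` models parametrized Martin-Löf `Id`-types (which includes the
plain Martin-Löf elimination). -/
def ModelsParamMLId (D : MorphismProperty C) : Prop :=
  ∀ ⦃A Γ : C⦄ (d : A ⟶ Γ), D d →
    ∃ (P : C) (π₀ π₁ : P ⟶ A) (hP : IsPullback π₀ π₁ d d)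
      (I : C) (r : A ⟶ I) (ε : I ⟶ P),
      r ≫ ε = hP.lift (𝟙 A) (𝟙 A) rfl ∧ D ε ∧
      ∀ ⦃Δ : C⦄ (σ : Δ ⟶ Γ)
        ⦃A₀ : C⦄ (pA : A₀ ⟶ Δ) (qA : A₀ ⟶ A), IsPullback pA qA σ d →
        ∀ ⦃Q : C⦄ (pI : Q ⟶ Δ) (qI : Q ⟶ I), IsPullback pI qI σ (ε ≫ π₀ ≫ d) →
        ∀ (m : A₀ ⟶ Q), m ≫ pI = pA → m ≫ qI = qA ≫ r →
          Llp D m ∧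
          ∀ ⦃Θ : C⦄ (θ : Θ ⟶ Q), D θ →
            ∀ ⦃E : C⦄ (e₁ : E ⟶ Θ) (e₂ : E ⟶ A₀), IsPullback e₁ e₂ θ m → Llp D e₁

/-- `^⧄D` is stable under pullback along morphisms of `D`. -/
def LlpStableUnderPullbackAlongD (D : MorphismProperty C) : Prop :=
  ∀ ⦃P A X Y : C⦄ (h : P ⟶ A) (k : P ⟶ X) (d : A ⟶ Y) (l : X ⟶ Y),
    IsPullback h k d l → D d → Llp D l → Llp D h



/-!
Every `f ∈ D̄` factors through its mapping path object as `l ≫ f₁` with `l ∈ ^⧄D` and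
`f₁ ∈ D`, and lifting `l` against `f` exhibits `f` as a retract of `f₁` in `C/Y`; likewise
`g` is a retract of some `g₁ ∈ D` in `C/X`. Pulling `g₁` back along the retraction `X₁ ⟶ X`
gives `g₂ ∈ D`, and `(C/X)(f*y, g)` becomes a retract of
`(C/X₁)(f₁*y, g₂) ≅ (C/Y)(y, Π_{f₁} g₂)`, naturally in `y`. By the Yoneda lemma the retraction
is induced by an idempotent of `Π_{f₁} g₂` over `Y`; its splitting, which exists by Cauchy
completeness, represents `Π_f g`, and as a retract of a display map it lies in `D̄`.
-/

abbrev RetractOver {X X₁ Y : C} (f : X ⟶ Y) (f₁ : X₁ ⟶ Y) := Retract (Over.mk f) (Over.mk f₁)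

namespace RetractOver

variable {X X₁ Y : C} {f : X ⟶ Y} {f₁ : X₁ ⟶ Y} (h : RetractOver f f₁)

@[simp]
lemma i_w : h.i.left ≫ f₁ = f := Over.w h.i

@[simp]
lemma r_w : h.r.left ≫ f = f₁ := Over.w h.r

@[simp]
lemma retract_left : h.i.left ≫ h.r.left = 𝟙 X := congrArg CommaMorphism.left h.retract

@[simp]
lemma retract_left_assoc {Z : C} (k : X ⟶ Z) : h.i.left ≫ h.r.left ≫ k = k := by
  rw [← Category.assoc, retract_left]
  exact Category.id_comp k

noncomputable def ofRightLiftingProperty {l : X ⟶ X₁} (hl : l ≫ f₁ = f)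
    [HasLiftingProperty l f] : RetractOver f f₁ :=
  have sq : CommSq (𝟙 X) l f f₁ := ⟨by simp [hl]⟩
  { i := Over.homMk l hl
    r := Over.homMk sq.lift sq.fac_right
    retract := by ext; exact sq.fac_left }

end RetractOver

lemma bar_eq_rlp_llp (D : MorphismProperty C) : Bar D = D.llp.rlp := rfl

lemma le_bar (D : MorphismProperty C) : D ≤ Bar D :=
  (MorphismProperty.le_llp_iff_le_rlp _ _).1 le_rfl

lemma IsDisplayMapCategory.exists_isPullback {D : MorphismProperty C}
    (hDMC : IsDisplayMapCategory D) {X Y A : C} {d : X ⟶ Y} (hd : D d) (α : A ⟶ Y) :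
    ∃ (P : C) (h : P ⟶ A) (k : P ⟶ X), IsPullback h k α d := by
  have := hDMC.hasPullback d α hd
  exact ⟨_, _, _, .of_hasPullback _ _⟩

theorem exists_llp_comp_display {D : MorphismProperty C} (hDMC : IsDisplayMapCategory D)
    (hSigma : ModelsSigma D) (hId : ModelsId D) {X Y : C} (f : X ⟶ Y) :
    ∃ (X₁ : C) (l : X ⟶ X₁) (f₁ : X₁ ⟶ Y), D.llp l ∧ D f₁ ∧ l ≫ f₁ = f := by
  have := hDMC.hasTerminal
  have hY : D (terminal.from Y) := hDMC.mem_of_isTerminal _ terminalIsTerminal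
  have hX : D (terminal.from X) := hDMC.mem_of_isTerminal _ terminalIsTerminal
  obtain ⟨P, π₀, π₁, hP, I, r, ε, hrε, hε, hlp⟩ := hId _ hY
  have hrεπ₀ : r ≫ ε ≫ π₀ = 𝟙 Y := by rw [← Category.assoc, hrε, hP.lift_fst]
  have hrεπ₁ : r ≫ ε ≫ π₁ = 𝟙 Y := by rw [← Category.assoc, hrε, hP.lift_snd]
  have hεπ₀ : D (ε ≫ π₀) := hSigma _ _ hε (hDMC.stable _ _ _ _ hP hY)
  obtain ⟨M, m, p, hM⟩ := hDMC.exists_isPullback hεπ₀ f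
  obtain ⟨N, nY, nX, hN⟩ := hDMC.exists_isPullback hX (terminal.from Y)
  -- `u : M = X ×_Y Id(Y) ⟶ N = Y × X` is a pullback of `ε`, so `u ≫ nY` is a display map
  set fP := hP.lift (nX ≫ f) nY (terminal.hom_ext _ _)
  set u := hN.lift (p ≫ ε ≫ π₁) m (terminal.hom_ext _ _)
  have hNP : IsPullback fP nX π₀ f :=
    IsPullback.of_right (by simpa [fP] using hN) (by simp [fP]) hP.flip
  have hMN : IsPullback p u ε fP :=
    IsPullback.of_bot (by simpa [u] using hM.flip)
      (hP.hom_ext (by simp [fP, u, hM.w]) (by simp [fP, u])) hNP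
  refine ⟨M, hM.lift (𝟙 X) (f ≫ r) (by simp [hrεπ₀]), u ≫ nY,
    hlp π₀ (Or.inl rfl) f _ _ hM _ (hM.lift_fst _ _ _) (hM.lift_snd _ _ _),
    hSigma _ _ (hDMC.stable _ _ _ _ hMN.flip hε) (hDMC.stable _ _ _ _ hN hX), ?_⟩
  simp [u, hrεπ₁]

section Pi

variable {W X Y Pi' : C}

abbrev OverHom {A B Y : C} (y : A ⟶ Y) (p : B ⟶ Y) : Type v := {u : A ⟶ B // u ≫ p = y}

def IsPiNatural (g : W ⟶ X) (f : X ⟶ Y) (pf : Pi' ⟶ Y)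
    (τ : ∀ ⦃A Q : C⦄ (y : A ⟶ Y) (a : Q ⟶ A) (q : Q ⟶ X), IsPullback a q y f →
      OverHom y pf → OverHom q g) : Prop :=
  ∀ ⦃A A' Q Q' : C⦄ (y : A ⟶ Y) (y' : A' ⟶ Y) (t : A ⟶ A') (ht : t ≫ y' = y)
    (a : Q ⟶ A) (q : Q ⟶ X) (hQ : IsPullback a q y f)
    (a' : Q' ⟶ A') (q' : Q' ⟶ X) (hQ' : IsPullback a' q' y' f)
    (s : Q ⟶ Q'), s ≫ a' = a ≫ t → s ≫ q' = q →
    ∀ (u' : A' ⟶ Pi') (hu' : u' ≫ pf = y'),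
      (τ y a q hQ ⟨t ≫ u', by rw [Category.assoc, hu', ht]⟩).1 =
        s ≫ (τ y' a' q' hQ' ⟨u', hu'⟩).1

abbrev PiHomEquiv (g : W ⟶ X) (f : X ⟶ Y) (pf : Pi' ⟶ Y) : Type (max u v) :=
  ∀ ⦃A Q : C⦄ (y : A ⟶ Y) (a : Q ⟶ A) (q : Q ⟶ X), IsPullback a q y f →
    (OverHom y pf ≃ OverHom q g)

def IsPi (g : W ⟶ X) (f : X ⟶ Y) (pf : Pi' ⟶ Y) : Prop :=
  ∃ φ : PiHomEquiv g f pf, IsPiNatural g f pf fun _ _ y a q hQ ↦ φ y a q hQ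

lemma modelsPi_iff (D : MorphismProperty C) :
    ModelsPi D ↔ ∀ ⦃W X Y : C⦄ (g : W ⟶ X) (f : X ⟶ Y), D g → D f →
      ∃ (PI : C) (pf : PI ⟶ Y), D pf ∧ IsPi g f pf :=
  Iff.rfl

variable {g : W ⟶ X} {f : X ⟶ Y} {pf : Pi' ⟶ Y}

/-- By the Yoneda lemma, `e` is the image of `𝟙 Pi'` under `φ⁻¹ ∘ E ∘ φ`. -/
theorem exists_idempotent_of_isPiNatural [HasPullback pf f]
    (φ : PiHomEquiv g f pf)
    (hφ : IsPiNatural g f pf fun _ _ y a q hQ ↦ φ y a q hQ)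
    (E : ∀ ⦃A Q : C⦄ (y : A ⟶ Y) (a : Q ⟶ A) (q : Q ⟶ X), IsPullback a q y f →
      OverHom q g → OverHom q g)
    (hE : ∀ ⦃A A' Q Q' : C⦄ (y : A ⟶ Y) (y' : A' ⟶ Y) (t : A ⟶ A')
      (a : Q ⟶ A) (q : Q ⟶ X) (hQ : IsPullback a q y f)
      (a' : Q' ⟶ A') (q' : Q' ⟶ X) (hQ' : IsPullback a' q' y' f)
      (s : Q ⟶ Q'), s ≫ a' = a ≫ t → ∀ (hs : s ≫ q' = q) (v : OverHom q' g),
        (E y a q hQ ⟨s ≫ v.1, by rw [Category.assoc, v.2, hs]⟩).1 = s ≫ (E y' a' q' hQ' v).1)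
    (hEE : ∀ ⦃A Q : C⦄ (y : A ⟶ Y) (a : Q ⟶ A) (q : Q ⟶ X) (hQ : IsPullback a q y f)
      (v : OverHom q g), E y a q hQ (E y a q hQ v) = E y a q hQ v) :
    ∃ (e : Pi' ⟶ Pi') (he : e ≫ pf = pf), e ≫ e = e ∧
      ∀ ⦃A Q : C⦄ (y : A ⟶ Y) (a : Q ⟶ A) (q : Q ⟶ X) (hQ : IsPullback a q y f)
        (u : OverHom y pf),
        φ y a q hQ ⟨u.1 ≫ e, by rw [Category.assoc, he, u.2]⟩ = E y a q hQ (φ y a q hQ u) := by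
  have hb := IsPullback.of_hasPullback pf f
  set e := (φ pf _ _ hb).symm (E pf _ _ hb (φ pf _ _ hb ⟨𝟙 Pi', Category.id_comp pf⟩))
  have key : ∀ ⦃A Q : C⦄ (y : A ⟶ Y) (a : Q ⟶ A) (q : Q ⟶ X) (hQ : IsPullback a q y f)
      (u : OverHom y pf),
      φ y a q hQ ⟨u.1 ≫ e.1, by rw [Category.assoc, e.2, u.2]⟩ =
        E y a q hQ (φ y a q hQ u) := by
    intro A Q y a q hQ u
    have hs : hb.lift (a ≫ u.1) q (by simp [u.2, hQ.w]) ≫ pullback.snd pf f = q := by simp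
    apply Subtype.ext
    rw [hφ y pf u.1 u.2 a q hQ _ _ hb _ (by simp) hs e.1 e.2]
    dsimp only
    rw [Subtype.coe_eta, Equiv.apply_symm_apply, ← hE y pf u.1 a q hQ _ _ hb _ (by simp) hs]
    congr 2
    apply Subtype.ext
    simpa using (hφ y pf u.1 u.2 a q hQ _ _ hb _ (by simp) hs (𝟙 Pi') (Category.id_comp pf)).symm
  refine ⟨e.1, e.2, ?_, key⟩
  have := key pf _ _ hb e
  rw [Equiv.apply_symm_apply, hEE, ← Equiv.apply_symm_apply (φ pf _ _ hb) (E _ _ _ _ _)] at this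
  exact congrArg Subtype.val ((φ pf _ _ hb).injective this)

/-- `pf₀` is the splitting `ι ≫ pf` of `e`, with `φ w = τ (w ≫ ι)` and `φ⁻¹ v = σ v ≫ ρ`. -/
theorem isPi_of_retraction [IsIdempotentComplete C] {e : Pi' ⟶ Pi'} (hee : e ≫ e = e)
    (he : e ≫ pf = pf)
    (σ : ∀ ⦃A Q : C⦄ (y : A ⟶ Y) (a : Q ⟶ A) (q : Q ⟶ X), IsPullback a q y f →
      OverHom q g → OverHom y pf)
    (τ : ∀ ⦃A Q : C⦄ (y : A ⟶ Y) (a : Q ⟶ A) (q : Q ⟶ X), IsPullback a q y f →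
      OverHom y pf → OverHom q g)
    (hτ : IsPiNatural g f pf τ)
    (hτσ : ∀ ⦃A Q : C⦄ (y : A ⟶ Y) (a : Q ⟶ A) (q : Q ⟶ X) (hQ : IsPullback a q y f)
      (v : OverHom q g), τ y a q hQ (σ y a q hQ v) = v)
    (hστ : ∀ ⦃A Q : C⦄ (y : A ⟶ Y) (a : Q ⟶ A) (q : Q ⟶ X) (hQ : IsPullback a q y f)
      (u : OverHom y pf), (σ y a q hQ (τ y a q hQ u)).1 = u.1 ≫ e) :
    ∃ (PI : C) (pf₀ : PI ⟶ Y), IsPi g f pf₀ ∧ Nonempty (RetractArrow pf₀ pf) := by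
  obtain ⟨PI, ι, ρ, hιρ, hρι⟩ := IsIdempotentComplete.idempotents_split Pi' e hee
  have hσ : ∀ ⦃A Q : C⦄ (y : A ⟶ Y) (a : Q ⟶ A) (q : Q ⟶ X) (hQ : IsPullback a q y f)
      (v : OverHom q g), (σ y a q hQ v).1 ≫ e = (σ y a q hQ v).1 := by
    intro A Q y a q hQ v
    rw [← hστ, hτσ]
  refine ⟨PI, ι ≫ pf, ⟨fun A Q y a q hQ ↦
    { toFun := fun w ↦ τ y a q hQ ⟨w.1 ≫ ι, by rw [Category.assoc, w.2]⟩
      invFun := fun v ↦ ⟨(σ y a q hQ v).1 ≫ ρ, by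
        simp only [Category.assoc]; rw [reassoc_of% hρι, he, (σ y a q hQ v).2]⟩
      left_inv := fun w ↦ Subtype.ext <| by
        simp [hστ, ← hρι, reassoc_of% hιρ, hιρ]
      right_inv := fun v ↦ by
        convert hτσ y a q hQ v using 2
        exact Subtype.ext (by simp [hρι, hσ]) }, ?_⟩, ?_⟩
  · intro A A' Q Q' y y' t ht a q hQ a' q' hQ' s hs hsq u' hu'
    simpa using hτ y y' t ht a q hQ a' q' hQ' s hs hsq (u' ≫ ι) (by simpa using hu')
  · exact ⟨
      { i := Arrow.homMk ι (𝟙 Y)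
        r := Arrow.homMk ρ (𝟙 Y) (by simp [reassoc_of% hρι, he])
        retract := by ext <;> simp [hιρ] }⟩

end Pi

section Retract

variable {W W₁ W₂ X X₁ Y Pi' : C} {g : W ⟶ X} {g₁ : W₁ ⟶ X} {f : X ⟶ Y} {f₁ : X₁ ⟶ Y}
  (rf : RetractOver f f₁) (rg : RetractOver g g₁)
  {g₂ : W₂ ⟶ X₁} {tW : W₂ ⟶ W₁} (hW₂ : IsPullback g₂ tW rf.r.left g₁)

/-- The idempotent on `f₁*y` whose splitting would be `f*y`. -/
noncomputable def squareIdem {A Q₁ : C} {y : A ⟶ Y} {a₁ : Q₁ ⟶ A} {q₁ : Q₁ ⟶ X₁}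
    (hQ₁ : IsPullback a₁ q₁ y f₁) : Q₁ ⟶ Q₁ :=
  hQ₁.lift a₁ (q₁ ≫ rf.r.left ≫ rf.i.left) (by simp [hQ₁.w])

lemma squareIdem_naturality {A A' Q₁ Q₁' : C} {y : A ⟶ Y} {y' : A' ⟶ Y} {t : A ⟶ A'}
    {a₁ : Q₁ ⟶ A} {q₁ : Q₁ ⟶ X₁} (hQ₁ : IsPullback a₁ q₁ y f₁)
    {a₁' : Q₁' ⟶ A'} {q₁' : Q₁' ⟶ X₁} (hQ₁' : IsPullback a₁' q₁' y' f₁)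
    {s : Q₁ ⟶ Q₁'} (hs : s ≫ a₁' = a₁ ≫ t) (hsq : s ≫ q₁' = q₁) :
    squareIdem rf hQ₁ ≫ s = s ≫ squareIdem rf hQ₁' :=
  hQ₁'.hom_ext (by simp [squareIdem, hs]) (by simp [squareIdem, hsq, reassoc_of% hsq])

lemma squareIdem_comp_self {A Q₁ : C} {y : A ⟶ Y} {a₁ : Q₁ ⟶ A} {q₁ : Q₁ ⟶ X₁}
    (hQ₁ : IsPullback a₁ q₁ y f₁) : squareIdem rf hQ₁ ≫ squareIdem rf hQ₁ = squareIdem rf hQ₁ :=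
  hQ₁.hom_ext (by simp [squareIdem]) (by simp [squareIdem])

/-- Through `W₂ = X₁ ×_X W₁` this is `v ↦ squareIdem ≫ v ≫ rg.r ≫ rg.i`; its fixed points
correspond to `(C/X)(f*y, g)`. -/
noncomputable def piHomIdem {A Q₁ : C} {y : A ⟶ Y} {a₁ : Q₁ ⟶ A} {q₁ : Q₁ ⟶ X₁}
    (hQ₁ : IsPullback a₁ q₁ y f₁) (w : OverHom q₁ g₂) : OverHom q₁ g₂ :=
  ⟨hW₂.lift q₁ (squareIdem rf hQ₁ ≫ w.1 ≫ tW ≫ rg.r.left ≫ rg.i.left)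
    (by simp [squareIdem, ← hW₂.w, reassoc_of% w.2]), hW₂.lift_fst _ _ _⟩

lemma piHomIdem_naturality {A A' Q₁ Q₁' : C} {y : A ⟶ Y} {y' : A' ⟶ Y} {t : A ⟶ A'}
    {a₁ : Q₁ ⟶ A} {q₁ : Q₁ ⟶ X₁} (hQ₁ : IsPullback a₁ q₁ y f₁)
    {a₁' : Q₁' ⟶ A'} {q₁' : Q₁' ⟶ X₁} (hQ₁' : IsPullback a₁' q₁' y' f₁)
    {s : Q₁ ⟶ Q₁'} (hs : s ≫ a₁' = a₁ ≫ t) (hsq : s ≫ q₁' = q₁) (w : OverHom q₁' g₂) :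
    (piHomIdem rf rg hW₂ hQ₁ ⟨s ≫ w.1, by rw [Category.assoc, w.2, hsq]⟩).1 =
      s ≫ (piHomIdem rf rg hW₂ hQ₁' w).1 :=
  hW₂.hom_ext (by simp [piHomIdem, hsq])
    (by simp [piHomIdem, reassoc_of% squareIdem_naturality rf hQ₁ hQ₁' hs hsq])

lemma piHomIdem_piHomIdem {A Q₁ : C} {y : A ⟶ Y} {a₁ : Q₁ ⟶ A} {q₁ : Q₁ ⟶ X₁}
    (hQ₁ : IsPullback a₁ q₁ y f₁) (w : OverHom q₁ g₂) :
    piHomIdem rf rg hW₂ hQ₁ (piHomIdem rf rg hW₂ hQ₁ w) = piHomIdem rf rg hW₂ hQ₁ w :=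
  Subtype.ext <| hW₂.hom_ext (by simp [piHomIdem])
    (by simp [piHomIdem, reassoc_of% squareIdem_comp_self rf hQ₁])

variable [HasPullbacksAlong f₁] {pf : Pi' ⟶ Y} (Φ : PiHomEquiv g₂ f₁ pf)

noncomputable def piRestrict {A Q : C} {y : A ⟶ Y} {a : Q ⟶ A} {q : Q ⟶ X}
    (hQ : IsPullback a q y f) (u : OverHom y pf) : OverHom q g :=
  ⟨(IsPullback.of_hasPullback y f₁).lift a (q ≫ rf.i.left) (by simp [hQ.w]) ≫
      (Φ y _ _ (.of_hasPullback y f₁) u).1 ≫ tW ≫ rg.r.left,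
    by simp [← hW₂.w, reassoc_of% (Φ y _ _ (.of_hasPullback y f₁) u).2]⟩

noncomputable def piExtend {A Q : C} {y : A ⟶ Y} {a : Q ⟶ A} {q : Q ⟶ X}
    (hQ : IsPullback a q y f) (v : OverHom q g) : OverHom y pf :=
  (Φ y _ _ (.of_hasPullback y f₁)).symm
    ⟨hW₂.lift (pullback.snd y f₁)
      (hQ.lift (pullback.fst y f₁) (pullback.snd y f₁ ≫ rf.r.left)
        (by simp [pullback.condition]) ≫ v.1 ≫ rg.i.left) (by simp [v.2]),
      hW₂.lift_fst _ _ _⟩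

lemma piRestrict_piExtend {A Q : C} {y : A ⟶ Y} {a : Q ⟶ A} {q : Q ⟶ X}
    (hQ : IsPullback a q y f) (v : OverHom q g) :
    piRestrict rf rg hW₂ Φ hQ (piExtend rf rg hW₂ Φ hQ v) = v := by
  have hlift_retract : (IsPullback.of_hasPullback y f₁).lift a (q ≫ rf.i.left) (by simp [hQ.w]) ≫
      hQ.lift (pullback.fst y f₁) (pullback.snd y f₁ ≫ rf.r.left)
        (by simp [pullback.condition]) = 𝟙 Q := by
    apply hQ.hom_ext <;> simp
  apply Subtype.ext
  simp [piRestrict, piExtend, reassoc_of% hlift_retract]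

lemma piExtend_piRestrict {A Q : C} {y : A ⟶ Y} {a : Q ⟶ A} {q : Q ⟶ X}
    (hQ : IsPullback a q y f) (u : OverHom y pf) :
    piExtend rf rg hW₂ Φ hQ (piRestrict rf rg hW₂ Φ hQ u) =
      (Φ y _ _ (.of_hasPullback y f₁)).symm
        (piHomIdem rf rg hW₂ (.of_hasPullback y f₁) (Φ y _ _ (.of_hasPullback y f₁) u)) := by
  have hlift_idem : hQ.lift (pullback.fst y f₁) (pullback.snd y f₁ ≫ rf.r.left)
        (by simp [pullback.condition]) ≫
      (IsPullback.of_hasPullback y f₁).lift a (q ≫ rf.i.left) (by simp [hQ.w]) =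
      squareIdem rf (.of_hasPullback y f₁) :=
    (IsPullback.of_hasPullback y f₁).hom_ext (by simp [squareIdem]) (by simp [squareIdem])
  rw [piExtend]
  congr 1
  apply Subtype.ext
  apply hW₂.hom_ext
  · simp [piHomIdem]
  · simp [piRestrict, piHomIdem, reassoc_of% hlift_idem]

lemma isPiNatural_piRestrict (hΦ : IsPiNatural g₂ f₁ pf fun _ _ y a q hQ ↦ Φ y a q hQ) :
    IsPiNatural g f pf fun _ _ _ _ _ hQ ↦ piRestrict rf rg hW₂ Φ hQ := by
  intro A A' Q Q' y y' t ht a q hQ a' q' hQ' s hs hsq u' hu'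
  have hb := IsPullback.of_hasPullback y f₁
  have hb' := IsPullback.of_hasPullback y' f₁
  have hS : hb'.lift (pullback.fst y f₁ ≫ t) (pullback.snd y f₁)
      (by simp [ht, pullback.condition]) ≫ pullback.fst y' f₁ = pullback.fst y f₁ ≫ t := by
    simp
  have hlift_comm : hb.lift a (q ≫ rf.i.left) (by simp [hQ.w]) ≫
      hb'.lift (pullback.fst y f₁ ≫ t) (pullback.snd y f₁) (by simp [ht, pullback.condition]) =
      s ≫ hb'.lift a' (q' ≫ rf.i.left) (by simp [hQ'.w]) := by
    apply hb'.hom_ext <;> simp [hs, reassoc_of% hsq]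
  dsimp only [piRestrict]
  rw [hΦ y y' t ht _ _ hb _ _ hb' _ hS (by simp) u' hu']
  simp [reassoc_of% hlift_comm]

end Retract

theorem isPi_of_retract [IsIdempotentComplete C] {W W₁ W₂ X X₁ Y Pi' : C} {g : W ⟶ X}
    {g₁ : W₁ ⟶ X} {f : X ⟶ Y} {f₁ : X₁ ⟶ Y} [HasPullbacksAlong f₁] (rf : RetractOver f f₁)
    (rg : RetractOver g g₁) {g₂ : W₂ ⟶ X₁} {tW : W₂ ⟶ W₁} (hW₂ : IsPullback g₂ tW rf.r.left g₁)
    {pf : Pi' ⟶ Y} (h : IsPi g₂ f₁ pf) :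
    ∃ (PI : C) (pf₀ : PI ⟶ Y), IsPi g f pf₀ ∧ Nonempty (RetractArrow pf₀ pf) := by
  obtain ⟨Φ, hΦ⟩ := h
  obtain ⟨e, he, hee, hΦe⟩ := exists_idempotent_of_isPiNatural Φ hΦ
    (fun _ _ _ _ _ hQ₁ ↦ piHomIdem rf rg hW₂ hQ₁)
    (fun _ _ _ _ _ _ _ _ _ hQ₁ _ _ hQ₁' _ hs hsq w ↦
      piHomIdem_naturality rf rg hW₂ hQ₁ hQ₁' hs hsq w)
    (fun _ _ _ _ _ hQ₁ w ↦ piHomIdem_piHomIdem rf rg hW₂ hQ₁ w)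
  refine isPi_of_retraction hee he (fun _ _ _ _ _ hQ ↦ piExtend rf rg hW₂ Φ hQ)
    (fun _ _ _ _ _ hQ ↦ piRestrict rf rg hW₂ Φ hQ) (isPiNatural_piRestrict rf rg hW₂ Φ hΦ)
    (fun _ _ _ _ _ hQ v ↦ piRestrict_piExtend rf rg hW₂ Φ hQ v) (fun _ _ y _ _ hQ u ↦ ?_)
  rw [piExtend_piRestrict, ← hΦe, Equiv.symm_apply_apply]

/-- if `C` is Cauchy complete and `(C, D)` models `Σ`-, `Id`-, and
`Π`-types, then `(C, D̄)` models `Π`-types. -/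
theorem statement_14 (hC : IsIdempotentComplete C) (D : MorphismProperty C)
    (hDMC : IsDisplayMapCategory D) (hSigma : ModelsSigma D) (hId : ModelsId D)
    (hPi : ModelsPi D) :
    ModelsPi (Bar D) := by
  rw [modelsPi_iff] at hPi ⊢
  intro W X Y g f hg hf
  obtain ⟨W₁, lg, g₁, hlg, hg₁, hlgg₁⟩ := exists_llp_comp_display hDMC hSigma hId g
  obtain ⟨X₁, lf, f₁, hlf, hf₁, hlff₁⟩ := exists_llp_comp_display hDMC hSigma hId f
  have := hg lg hlg
  have := hf lf hlf
  let rg := RetractOver.ofRightLiftingProperty hlgg₁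
  let rf := RetractOver.ofRightLiftingProperty hlff₁
  obtain ⟨W₂, g₂, tW, hW₂⟩ := hDMC.exists_isPullback hg₁ rf.r.left
  have : HasPullbacksAlong f₁ := fun y ↦ hDMC.hasPullback f₁ y hf₁
  obtain ⟨Pi', pf', hpf', hPi'⟩ := hPi g₂ f₁ (hDMC.stable _ _ _ _ hW₂ hg₁) hf₁
  obtain ⟨PI, pf, hPI, ⟨hret⟩⟩ := isPi_of_retract rf rg hW₂ hPi'
  rw [bar_eq_rlp_llp]
  exact ⟨PI, pf, MorphismProperty.of_retract hret (le_bar D _ hpf'), hPI⟩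

end DMCPaper
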